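/- arXiv:1607.06623 — 6 statements merged into one kernel-verified Lean document; each statement's English description precedes it below -/
import Mathlib

section
/- Let X ∈ ℝ^{p×p} be symmetric positive definite and Y ∈ ℝ^{q×p} have full row rank. Then the block matrix F = −[[X, Yᵀ],[−Y, 0]] ∈ ℝ^{(p+q)×(p+q)} is Hurwitz, i.e., every complex eigenvalue of F has strictly negative real part. -/
/-!
If `F v = z v` with `v = (u, w) ≠ 0`, then `Re z ‖v‖² = Re ⟪v, F v⟫ = -Re ⟪u, X u⟫`: the
off-diagonal blocks of `F` form a skew-Hermitian matrix, so they contribute only an imaginary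
part. Hence `Re z ≤ 0`, and `Re z = 0` forces `u = 0`; the first block row of the eigenvalue
equation then reads `Yᵀ w = 0`, so `w = 0` because `Y` has full row rank.
-/

open Matrix
open scoped ComplexOrder

namespace Matrix

section Blocks

variable {𝕜 m n : Type*} [RCLike 𝕜] [Fintype m] [Fintype n]

lemma re_star_dotProduct_fromBlocks_skew_mulVec (A : Matrix m m 𝕜) (B : Matrix m n 𝕜)
    (u : m → 𝕜) (w : n → 𝕜) :
    RCLike.re (star (Sum.elim u w) ⬝ᵥ (fromBlocks A B (-Bᴴ) 0 *ᵥ Sum.elim u w)) =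
      RCLike.re (star u ⬝ᵥ (A *ᵥ u)) := by
  have hskew : star w ⬝ᵥ (Bᴴ *ᵥ u) = star (star u ⬝ᵥ (B *ᵥ w)) := by
    rw [star_dotProduct, star_mulVec, ← dotProduct_mulVec, conjTranspose_conjTranspose]
  simp only [fromBlocks_mulVec, Sum.elim_comp_inl, Sum.elim_comp_inr, Function.star_sumElim,
    sumElim_dotProduct_sumElim, dotProduct_add, neg_mulVec, dotProduct_neg, zero_mulVec,
    add_zero, hskew, map_add, map_neg, RCLike.star_def, RCLike.conj_re]
  ring

theorem re_lt_zero_of_hasEigenvalue_neg_fromBlocks_skew {A : Matrix m m 𝕜} {B : Matrix m n 𝕜}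
    (hA : ∀ u, u ≠ 0 → 0 < RCLike.re (star u ⬝ᵥ (A *ᵥ u)))
    (hB : Function.Injective B.mulVec) {z : 𝕜}
    (hz : Module.End.HasEigenvalue (-fromBlocks A B (-Bᴴ) 0).mulVecLin z) : RCLike.re z < 0 := by
  obtain ⟨v, hv⟩ := hz.exists_hasEigenvector
  have hMv : fromBlocks A B (-Bᴴ) 0 *ᵥ v = -z • v := by
    have := hv.apply_eq_smul
    rw [mulVecLin_apply, neg_mulVec] at this
    rw [neg_smul, ← this, neg_neg]
  obtain ⟨u, w, rfl⟩ : ∃ u w, v = Sum.elim u w := ⟨_, _, (Sum.elim_comp_inl_inr v).symm⟩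
  by_contra! hz_re
  have hu : u = 0 := by
    by_contra hu
    have hquad := re_star_dotProduct_fromBlocks_skew_mulVec A B u w
    obtain ⟨hnorm_re, hnorm_im⟩ :=
      RCLike.nonneg_iff.mp (dotProduct_star_self_nonneg (Sum.elim u w))
    rw [hMv, dotProduct_smul, smul_eq_mul, RCLike.mul_re, hnorm_im, mul_zero, sub_zero,
      map_neg] at hquad
    nlinarith [hA u hu]
  have hw : w = 0 := hB <| funext fun i => by
    simpa [fromBlocks_mulVec, hu] using congrFun hMv (Sum.inl i)
  exact hv.2 (by simp [hu, hw])

end Blocks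

section Complexification

variable {m n : Type*} [Fintype n]

lemma re_map_ofReal_mulVec (M : Matrix m n ℝ) (w : n → ℂ) :
    (fun i => (M.map (↑) *ᵥ w) i |>.re) = M *ᵥ fun j => (w j).re := by
  ext i
  simp [mulVec, dotProduct, Complex.re_sum]

lemma im_map_ofReal_mulVec (M : Matrix m n ℝ) (w : n → ℂ) :
    (fun i => (M.map (↑) *ᵥ w) i |>.im) = M *ᵥ fun j => (w j).im := by
  ext i
  simp [mulVec, dotProduct, Complex.im_sum]

omit [Fintype n] in
lemma eq_zero_of_re_eq_zero_of_im_eq_zero {w : n → ℂ} (hre : (fun i => (w i).re) = 0)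
    (him : (fun i => (w i).im) = 0) : w = 0 :=
  funext fun i => Complex.ext (congrFun hre i) (congrFun him i)

lemma re_star_dotProduct (v w : n → ℂ) :
    (star v ⬝ᵥ w).re = (fun i => (v i).re) ⬝ᵥ (fun i => (w i).re) +
      (fun i => (v i).im) ⬝ᵥ (fun i => (w i).im) := by
  simp [dotProduct, Complex.re_sum, Finset.sum_add_distrib]

lemma PosDef.re_star_dotProduct_map_ofReal_mulVec_pos {X : Matrix n n ℝ} (hX : X.PosDef)
    {u : n → ℂ} (hu : u ≠ 0) : 0 < (star u ⬝ᵥ (X.map (↑) *ᵥ u)).re := by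
  rw [re_star_dotProduct, re_map_ofReal_mulVec, im_map_ofReal_mulVec]
  have hquad_pos {x : n → ℝ} (hx : x ≠ 0) : 0 < x ⬝ᵥ (X *ᵥ x) := by
    simpa using hX.dotProduct_mulVec_pos hx
  have hquad_nonneg (x : n → ℝ) : 0 ≤ x ⬝ᵥ (X *ᵥ x) := by
    simpa using hX.posSemidef.dotProduct_mulVec_nonneg x
  by_cases hre : (fun i => (u i).re) = 0
  · have him : (fun i => (u i).im) ≠ 0 := fun him =>
      hu (eq_zero_of_re_eq_zero_of_im_eq_zero hre him)
    linarith [hquad_nonneg fun i => (u i).re, hquad_pos him]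
  · linarith [hquad_pos hre, hquad_nonneg fun i => (u i).im]

lemma mulVec_map_ofReal_injective {M : Matrix m n ℝ} (hM : Function.Injective M.mulVec) :
    Function.Injective (M.map ((↑) : ℝ → ℂ)).mulVec := by
  rw [← coe_mulVecLin, injective_iff_map_eq_zero]
  intro w hw
  rw [mulVecLin_apply] at hw
  refine eq_zero_of_re_eq_zero_of_im_eq_zero (hM ?_) (hM ?_)
  · rw [← re_map_ofReal_mulVec, hw, mulVec_zero]; rfl
  · rw [← im_map_ofReal_mulVec, hw, mulVec_zero]; rfl

lemma mulVec_injective_of_rank_eq_card {K : Type*} [Field K] {M : Matrix m n K}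
    (hM : M.rank = Fintype.card n) : Function.Injective M.mulVec := by
  rw [mulVec_injective_iff, linearIndependent_iff_card_eq_finrank_span, ← hM,
    rank_eq_finrank_span_cols]
  rfl

end Complexification

end Matrix

theorem statement9 {p q : ℕ} (X : Matrix (Fin p) (Fin p) ℝ) (Y : Matrix (Fin q) (Fin p) ℝ)
    (hX : X.PosDef) (hY : Y.rank = q) :
    ∀ z : ℂ, Module.End.HasEigenvalue
        (Matrix.mulVecLin ((-(Matrix.fromBlocks X Yᵀ (-Y) 0)).map (fun a : ℝ => (a : ℂ)))) z →
      z.re < 0 := by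
  intro z hz
  have hF : (-(fromBlocks X Yᵀ (-Y) 0)).map (fun a : ℝ => (a : ℂ)) =
      -fromBlocks (X.map (↑)) (Yᵀ.map (↑)) (-(Yᵀ.map (↑))ᴴ) 0 := by
    ext (i | i) (j | j) <;> simp
  have hYt_inj : Function.Injective Yᵀ.mulVec :=
    mulVec_injective_of_rank_eq_card (by rw [rank_transpose, hY, Fintype.card_fin])
  rw [hF] at hz
  exact re_lt_zero_of_hasEigenvalue_neg_fromBlocks_skew
    (fun _ hu => hX.re_star_dotProduct_map_ofReal_mulVec_pos hu)
    (mulVec_map_ofReal_injective hYt_inj) hz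
end

section
/- Let L̄ ∈ ℝ^{n×n} be the Laplacian of a symmetric nonnegative matrix with zero diagonal whose associated graph is connected, let H_1, …, H_n ∈ ℝ^{m×m} be symmetric positive semidefinite with ∑_{i=1}^n H_i positive definite, let 𝓗 = diag(H_1,…,H_n), and let V = (V_1, 𝟏/√n) be an orthogonal matrix with VᵀL̄V = diag(𝓢, 0) where 𝓢 = diag(κ_2,…,κ_n) has positive diagonal entries. Then the matrix F = −[[(L̄ ⊗ I_m) + 𝓗, V_1𝓢 ⊗ I_m],[−𝓢V_1ᵀ ⊗ I_m, 0]] is Hurwitz, i.e., every complex eigenvalue of F has strictly negative real part. -/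
/-!
Write an eigenvector of `F` as `(x, y)`. The off-diagonal blocks of `F` are `-B` and `Bᵀ` with
`B = V₁𝓢 ⊗ I`, so they contribute `t̄ - t` (with `t = x⋆ B y`) to `z (‖x‖² + ‖y‖²)`, whose
real part is therefore `-x⋆ M x` with `M = L̄ ⊗ I + 𝓗`. This is negative because `M` is
positive definite: since `L̄ = V₁ 𝓢 V₁ᵀ` and `V₁ V₁ᵀ + 𝟏𝟏ᵀ/n = I`, the kernel of `L̄ ⊗ I`
consists of the vectors `𝟏 ⊗ u`, and `𝓗 (𝟏 ⊗ u) = 0` forces `(∑ H_i) u = 0`. The eigenvector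
cannot have `x = 0`, for then `B y = 0`, and `B` has the left inverse `𝓢⁻¹V₁ᵀ ⊗ I`.
-/

open Matrix BigOperators
open scoped Kronecker

/-- The Laplacian of a matrix `A`: `L = D - A` with `D = diag(row sums of A)`. -/
noncomputable def graphLaplacian {n : ℕ} (A : Matrix (Fin n) (Fin n) ℝ) :
    Matrix (Fin n) (Fin n) ℝ :=
  Matrix.diagonal (fun i => ∑ j, A i j) - A

/-- Connectivity of the graph associated to a nonnegative matrix `A`. -/
def graphConnected {n : ℕ} (A : Matrix (Fin n) (Fin n) ℝ) : Prop :=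
  ∀ i j : Fin n, Relation.ReflTransGen (fun a b => a ≠ b ∧ 0 < A a b) i j

/-- The block diagonal matrix `diag(H_1, …, H_n)` acting on `ℝ^{nm}`. -/
def blockDiag {n m : ℕ} (H : Fin n → Matrix (Fin m) (Fin m) ℝ) :
    Matrix (Fin n × Fin m) (Fin n × Fin m) ℝ :=
  fun p q => if p.1 = q.1 then H p.1 p.2 q.2 else 0

open scoped ComplexOrder

namespace Matrix

variable {ι κ : Type*} [Fintype ι]

theorem PosDef.map_ofReal [DecidableEq ι] {M : Matrix ι ι ℝ} (hM : M.PosDef) :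
    (M.map ((↑) : ℝ → ℂ)).PosDef := by
  obtain ⟨B, rfl⟩ : ∃ B : Matrix ι ι ℝ, M = star B * B := by
    open MatrixOrder in exact CStarAlgebra.nonneg_iff_eq_star_mul_self.mp hM.posSemidef.nonneg
  have hmap : (star B * B).map ((↑) : ℝ → ℂ) = (B.map (↑))ᴴ * B.map (↑) := by
    rw [star_eq_conjTranspose, ← conjTranspose_map _ (fun _ => (Complex.conj_ofReal _).symm)]
    exact Matrix.map_mul (f := Complex.ofRealHom)
  rw [hmap, (posSemidef_conjTranspose_mul_self _).posDef_iff_det_ne_zero, ← hmap]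
  exact (RingHom.map_det Complex.ofRealHom _).symm.trans_ne
    (Complex.ofReal_ne_zero.mpr hM.det_pos.ne')

theorem PosSemidef.posDef_add_of_mulVec_eq_zero {𝕜 : Type*} [RCLike 𝕜] {P Q : Matrix ι ι 𝕜}
    (hP : P.PosSemidef) (hQ : Q.PosSemidef) (h : ∀ x, P *ᵥ x = 0 → Q *ᵥ x = 0 → x = 0) :
    (P + Q).PosDef := by
  refine .of_dotProduct_mulVec_pos (hP.1.add hQ.1) fun x hx => ?_
  have hPx := hP.dotProduct_mulVec_nonneg x
  have hQx := hQ.dotProduct_mulVec_nonneg x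
  rw [add_mulVec, dotProduct_add]
  refine (add_nonneg hPx hQx).lt_of_ne fun h0 => hx ?_
  obtain ⟨hPx0, hQx0⟩ := (add_eq_zero_iff_of_nonneg hPx hQx).mp h0.symm
  exact h x ((hP.dotProduct_mulVec_zero_iff x).mp hPx0) ((hQ.dotProduct_mulVec_zero_iff x).mp hQx0)

theorem PosDef.conjTranspose_mulVec_eq_zero [Fintype κ] {𝕜 : Type*} [RCLike 𝕜]
    {S : Matrix κ κ 𝕜} (hS : S.PosDef) {W : Matrix ι κ 𝕜} {x : ι → 𝕜} (hx : (W * S * Wᴴ) *ᵥ x = 0) :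
    Wᴴ *ᵥ x = 0 := by
  by_contra hne
  have hpos := hS.dotProduct_mulVec_pos hne
  rw [star_mulVec, conjTranspose_conjTranspose, ← dotProduct_mulVec, mulVec_mulVec,
    mulVec_mulVec, hx, dotProduct_zero] at hpos
  exact hpos.false

theorem kronecker_one_mulVec_apply {R μ : Type*} [CommSemiring R] [Fintype μ] [DecidableEq μ]
    (L : Matrix ι ι R) (x : ι × μ → R) (i : ι) (k : μ) :
    ((L ⊗ₖ (1 : Matrix μ μ R)) *ᵥ x) (i, k) = (L *ᵥ fun j => x (j, k)) i := by
  simp [mulVec, dotProduct, one_apply, Fintype.sum_prod_type]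

theorem re_lt_zero_of_hasEigenvalue_neg_fromBlocks [Fintype κ] [DecidableEq ι] [DecidableEq κ]
    {M : Matrix ι ι ℂ} (hM : M.PosDef) {B : Matrix ι κ ℂ} {P : Matrix κ ι ℂ} (hPB : P * B = 1)
    {z : ℂ} (hz : Module.End.HasEigenvalue (mulVecLin (-fromBlocks M B (-Bᴴ) 0)) z) :
    z.re < 0 := by
  obtain ⟨v, hv⟩ := hz.exists_hasEigenvector
  have hFv : -fromBlocks M B (-Bᴴ) 0 *ᵥ v = z • v := hv.apply_eq_smul
  rw [neg_mulVec, fromBlocks_mulVec] at hFv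
  set x := v ∘ Sum.inl
  set y := v ∘ Sum.inr
  have hx_eq : -(M *ᵥ x + B *ᵥ y) = z • x := funext fun i => by
    simpa [x] using congrFun hFv (Sum.inl i)
  have hy_eq : Bᴴ *ᵥ x = z • y := funext fun j => by
    simpa [x, y, neg_mulVec] using congrFun hFv (Sum.inr j)
  have hx : x ≠ 0 := by
    intro hx0
    have hBy : B *ᵥ y = 0 := by simpa [hx0] using hx_eq
    have hy0 : y = 0 := by rw [← one_mulVec y, ← hPB, ← mulVec_mulVec, hBy, mulVec_zero]
    exact hv.2 <| funext fun
      | .inl i => congrFun hx0 i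
      | .inr j => congrFun hy0 j
  set t := star x ⬝ᵥ B *ᵥ y
  have ht : star y ⬝ᵥ Bᴴ *ᵥ x = star t := by
    rw [star_dotProduct, star_mulVec, conjTranspose_conjTranspose, ← dotProduct_mulVec]
  have hquad : z * (star x ⬝ᵥ x + star y ⬝ᵥ y) = -(star x ⬝ᵥ M *ᵥ x) - t + star t := by
    rw [mul_add, ← smul_eq_mul, ← smul_eq_mul, ← dotProduct_smul, ← dotProduct_smul, ← hx_eq,
      ← hy_eq, ht, dotProduct_neg, dotProduct_add]
    ring
  have hs : 0 < star x ⬝ᵥ x + star y ⬝ᵥ y :=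
    add_pos_of_pos_of_nonneg (dotProduct_star_self_pos_iff.mpr hx) (dotProduct_star_self_nonneg y)
  have hq : 0 < star x ⬝ᵥ M *ᵥ x := hM.dotProduct_mulVec_pos hx
  have hre := congrArg Complex.re hquad
  rw [Complex.lt_def] at hs hq
  simp only [Complex.mul_re, ← hs.2, Complex.add_re, Complex.sub_re, Complex.neg_re,
    Complex.star_def, Complex.conj_re] at hre
  simp only [Complex.zero_re, Complex.zero_im, Complex.add_re] at hs hq hre
  nlinarith

theorem re_lt_zero_of_hasEigenvalue_map_neg_fromBlocks [Fintype κ] [DecidableEq ι]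
    [DecidableEq κ]
    {M : Matrix ι ι ℝ} (hM : M.PosDef) {B : Matrix ι κ ℝ} {P : Matrix κ ι ℝ} (hPB : P * B = 1)
    {z : ℂ} (hz : Module.End.HasEigenvalue
      (mulVecLin ((-fromBlocks M B (-Bᵀ) 0).map ((↑) : ℝ → ℂ))) z) :
    z.re < 0 := by
  have hmap : (-fromBlocks M B (-Bᵀ) 0).map ((↑) : ℝ → ℂ) =
      -fromBlocks (M.map (↑)) (B.map (↑)) (-(B.map (↑))ᴴ) 0 := by
    ext (i | i) (j | j) <;> simp [conjTranspose_apply]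
  rw [hmap] at hz
  refine re_lt_zero_of_hasEigenvalue_neg_fromBlocks hM.map_ofReal (P := P.map (↑)) ?_ hz
  exact (Matrix.map_mul (f := Complex.ofRealHom)).symm.trans
    (hPB ▸ Matrix.map_one _ Complex.ofReal_zero Complex.ofReal_one)

section Orthogonal

variable {R ν : Type*} [CommRing R] {V₁ : Matrix ι κ R} {c : Matrix ι ν R}

theorem transpose_mul_self_eq_one_of_fromCols [DecidableEq κ] [DecidableEq ν]
    (hV : (fromCols V₁ c)ᵀ * fromCols V₁ c = 1) : V₁ᵀ * V₁ = 1 := by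
  rw [transpose_fromCols, fromRows_mul_fromCols, ← fromBlocks_one] at hV
  exact (fromBlocks_inj.mp hV).1

theorem mul_transpose_add_mul_transpose_eq_one [Fintype κ] [Fintype ν] [DecidableEq ι]
    [DecidableEq κ] [DecidableEq ν]
    (e : ι ≃ κ ⊕ ν) (hV : (fromCols V₁ c)ᵀ * fromCols V₁ c = 1) : V₁ * V₁ᵀ + c * cᵀ = 1 := by
  rw [← fromCols_mul_fromRows, ← transpose_fromCols]
  exact (mul_eq_one_comm_of_equiv e.symm).mp hV

theorem eq_mul_mul_transpose_of_fromCols [Fintype κ] [Fintype ν] [DecidableEq ι]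
    [DecidableEq κ] [DecidableEq ν]
    (e : ι ≃ κ ⊕ ν) (hV : (fromCols V₁ c)ᵀ * fromCols V₁ c = 1) {L : Matrix ι ι R}
    {S : Matrix κ κ R} (hL : (fromCols V₁ c)ᵀ * L * fromCols V₁ c = fromBlocks S 0 0 0) :
    L = V₁ * S * V₁ᵀ := by
  have hVV : fromCols V₁ c * (fromCols V₁ c)ᵀ = 1 := (mul_eq_one_comm_of_equiv e.symm).mp hV
  calc L = fromCols V₁ c * (fromCols V₁ c)ᵀ * L * (fromCols V₁ c * (fromCols V₁ c)ᵀ) := by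
        rw [hVV, Matrix.one_mul, Matrix.mul_one]
    _ = fromCols V₁ c * ((fromCols V₁ c)ᵀ * L * fromCols V₁ c) * (fromCols V₁ c)ᵀ := by
        simp only [Matrix.mul_assoc]
    _ = V₁ * S * V₁ᵀ := by
        rw [hL, fromCols_mul_fromBlocks, transpose_fromCols, fromCols_mul_fromRows]
        simp

end Orthogonal

theorem apply_eq_apply_of_mul_mul_transpose_mulVec_eq_zero [Fintype κ] [DecidableEq ι]
    {V₁ : Matrix ι κ ℝ} {S : Matrix κ κ ℝ} (hS : S.PosDef) {a : ℝ}
    (hV : V₁ * V₁ᵀ + of (fun _ (_ : Unit) => a) * (of fun _ (_ : Unit) => a)ᵀ = 1)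
    {x : ι → ℝ} (hx : (V₁ * S * V₁ᵀ) *ᵥ x = 0) (i j : ι) : x i = x j := by
  set c : Matrix ι Unit ℝ := of fun _ _ => a
  have hV₁x : V₁ᵀ *ᵥ x = 0 := hS.conjTranspose_mulVec_eq_zero (W := V₁) hx
  have hx_eq : x = c *ᵥ (cᵀ *ᵥ x) := by
    calc x = (V₁ * V₁ᵀ + c * cᵀ) *ᵥ x := by rw [hV, one_mulVec]
      _ = c *ᵥ (cᵀ *ᵥ x) := by
        rw [add_mulVec, ← mulVec_mulVec, ← mulVec_mulVec, hV₁x, mulVec_zero, zero_add]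
  rw [hx_eq]
  simp [c, mulVec, dotProduct]

end Matrix

section blockDiag

variable {n m : ℕ}

theorem blockDiag_mulVec_apply (H : Fin n → Matrix (Fin m) (Fin m) ℝ) (x : Fin n × Fin m → ℝ)
    (i : Fin n) (k : Fin m) : (blockDiag H *ᵥ x) (i, k) = (H i *ᵥ fun l => x (i, l)) k := by
  simp [mulVec, dotProduct, _root_.blockDiag, Fintype.sum_prod_type]

theorem posSemidef_blockDiag {H : Fin n → Matrix (Fin m) (Fin m) ℝ}
    (hH : ∀ i, (H i).PosSemidef) : (blockDiag H).PosSemidef := by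
  refine .of_dotProduct_mulVec_nonneg ?_ fun x => ?_
  · ext ⟨i, k⟩ ⟨j, l⟩
    by_cases hij : i = j
    · subst hij
      simpa [_root_.blockDiag] using (hH i).isHermitian.apply k l
    · simp [_root_.blockDiag, hij, Ne.symm hij]
  · rw [dotProduct, Fintype.sum_prod_type]
    simp_rw [blockDiag_mulVec_apply]
    exact Finset.sum_nonneg fun i _ => (hH i).dotProduct_mulVec_nonneg _

theorem posDef_kronecker_one_add_blockDiag {L : Matrix (Fin n) (Fin n) ℝ} (hL : L.PosSemidef)
    (hker : ∀ x, L *ᵥ x = 0 → ∀ i j, x i = x j) {H : Fin n → Matrix (Fin m) (Fin m) ℝ}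
    (hH : ∀ i, (H i).PosSemidef) (hHsum : (∑ i, H i).PosDef) :
    (L ⊗ₖ (1 : Matrix (Fin m) (Fin m) ℝ) + blockDiag H).PosDef := by
  refine (hL.kronecker PosSemidef.one).posDef_add_of_mulVec_eq_zero (posSemidef_blockDiag hH)
    fun x hLx hHx => ?_
  have hconst : ∀ i j k, x (i, k) = x (j, k) := fun i j k =>
    hker (fun j => x (j, k)) (funext fun i => by rw [← kronecker_one_mulVec_apply, hLx]; rfl) i j
  funext ⟨i, k⟩
  have hHu : ∀ j, H j *ᵥ (fun l => x (i, l)) = 0 := fun j => funext fun l => by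
    rw [show (fun l => x (i, l)) = fun l => x (j, l) from funext fun l => hconst i j l,
      ← blockDiag_mulVec_apply, hHx]
    rfl
  have hu : (fun l => x (i, l)) = 0 := by
    by_contra hu
    have hpos := hHsum.dotProduct_mulVec_pos hu
    rw [sum_mulVec, Finset.sum_eq_zero fun j _ => hHu j, dotProduct_zero] at hpos
    exact hpos.false
  exact congrFun hu k

end blockDiag

theorem statement10_general {n m : ℕ} (A : Matrix (Fin n) (Fin n) ℝ)
    (H : Fin n → Matrix (Fin m) (Fin m) ℝ)
    (hH : ∀ i, (H i).PosSemidef) (hHsum : (∑ i, H i).PosDef)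
    (V₁ : Matrix (Fin n) (Fin (n - 1)) ℝ) (κ : Fin (n - 1) → ℝ) (hκ : ∀ i, 0 < κ i)
    -- V = (V₁, 𝟏/√n) is orthogonal
    (hVorth : (Matrix.fromCols V₁ (Matrix.of fun _ (_ : Unit) => 1 / Real.sqrt n))ᵀ *
        Matrix.fromCols V₁ (Matrix.of fun _ (_ : Unit) => 1 / Real.sqrt n) = 1)
    -- Vᵀ L̄ V = diag(𝓢, 0)
    (hVdiag : (Matrix.fromCols V₁ (Matrix.of fun _ (_ : Unit) => 1 / Real.sqrt n))ᵀ *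
        graphLaplacian A *
        Matrix.fromCols V₁ (Matrix.of fun _ (_ : Unit) => 1 / Real.sqrt n) =
        Matrix.fromBlocks (Matrix.diagonal κ) 0 0 0) :
    -- F = −[[(L̄ ⊗ I_m) + 𝓗, V₁𝓢 ⊗ I_m], [−𝓢V₁ᵀ ⊗ I_m, 0]] is Hurwitz
    ∀ z : ℂ, Module.End.HasEigenvalue
        (Matrix.mulVecLin
          ((-(Matrix.fromBlocks
              (graphLaplacian A ⊗ₖ (1 : Matrix (Fin m) (Fin m) ℝ) + blockDiag H)
              ((V₁ * Matrix.diagonal κ) ⊗ₖ (1 : Matrix (Fin m) (Fin m) ℝ))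
              (-((Matrix.diagonal κ * V₁ᵀ) ⊗ₖ (1 : Matrix (Fin m) (Fin m) ℝ)))
              0)).map (fun a : ℝ => (a : ℂ)))) z →
      z.re < 0 := by
  intro z hz
  have hn : n ≠ 0 := by
    rintro rfl
    simpa using congrFun (congrFun hVorth (Sum.inr ())) (Sum.inr ())
  have e : Fin n ≃ Fin (n - 1) ⊕ Unit := Fintype.equivOfCardEq (by simp; omega)
  have hκD : (diagonal κ).PosDef := .diagonal hκ
  have hL : graphLaplacian A = V₁ * diagonal κ * V₁ᵀ :=
    eq_mul_mul_transpose_of_fromCols e hVorth hVdiag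
  have hM : (graphLaplacian A ⊗ₖ (1 : Matrix (Fin m) (Fin m) ℝ) + blockDiag H).PosDef := by
    refine posDef_kronecker_one_add_blockDiag ?_ (fun x hx =>
      apply_eq_apply_of_mul_mul_transpose_mulVec_eq_zero hκD
        (mul_transpose_add_mul_transpose_eq_one e hVorth) (hL ▸ hx)) hH hHsum
    rw [hL]
    exact hκD.posSemidef.mul_mul_conjTranspose_same V₁
  have hPB : ((diagonal κ⁻¹ * V₁ᵀ) ⊗ₖ (1 : Matrix (Fin m) (Fin m) ℝ)) *
      ((V₁ * diagonal κ) ⊗ₖ (1 : Matrix (Fin m) (Fin m) ℝ)) = 1 := by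
    rw [← mul_kronecker_mul, Matrix.mul_assoc, ← Matrix.mul_assoc V₁ᵀ,
      transpose_mul_self_eq_one_of_fromCols hVorth, Matrix.one_mul, diagonal_mul_diagonal,
      show (fun i => κ⁻¹ i * κ i) = fun _ => 1 from funext fun i => inv_mul_cancel₀ (hκ i).ne',
      diagonal_one, Matrix.one_mul, one_kronecker_one]
  have hBt : (diagonal κ * V₁ᵀ) ⊗ₖ (1 : Matrix (Fin m) (Fin m) ℝ) =
      ((V₁ * diagonal κ) ⊗ₖ (1 : Matrix (Fin m) (Fin m) ℝ))ᵀ := by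
    rw [← kroneckerMap_transpose, transpose_mul, diagonal_transpose, transpose_one]
  rw [hBt] at hz
  exact re_lt_zero_of_hasEigenvalue_map_neg_fromBlocks hM hPB hz

theorem statement10 {n m : ℕ} (A : Matrix (Fin n) (Fin n) ℝ)
    (hsym : A.IsSymm) (hnn : ∀ i j, 0 ≤ A i j) (hdiag : ∀ i, A i i = 0)
    (hconn : graphConnected A)
    (H : Fin n → Matrix (Fin m) (Fin m) ℝ)
    (hH : ∀ i, (H i).PosSemidef) (hHsum : (∑ i, H i).PosDef)
    (V₁ : Matrix (Fin n) (Fin (n - 1)) ℝ) (κ : Fin (n - 1) → ℝ) (hκ : ∀ i, 0 < κ i)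
    -- V = (V₁, 𝟏/√n) is orthogonal
    (hVorth : (Matrix.fromCols V₁ (Matrix.of fun _ (_ : Unit) => 1 / Real.sqrt n))ᵀ *
        Matrix.fromCols V₁ (Matrix.of fun _ (_ : Unit) => 1 / Real.sqrt n) = 1)
    -- Vᵀ L̄ V = diag(𝓢, 0)
    (hVdiag : (Matrix.fromCols V₁ (Matrix.of fun _ (_ : Unit) => 1 / Real.sqrt n))ᵀ *
        graphLaplacian A *
        Matrix.fromCols V₁ (Matrix.of fun _ (_ : Unit) => 1 / Real.sqrt n) =
        Matrix.fromBlocks (Matrix.diagonal κ) 0 0 0) :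
    -- F = −[[(L̄ ⊗ I_m) + 𝓗, V₁𝓢 ⊗ I_m], [−𝓢V₁ᵀ ⊗ I_m, 0]] is Hurwitz
    ∀ z : ℂ, Module.End.HasEigenvalue
        (Matrix.mulVecLin
          ((-(Matrix.fromBlocks
              (graphLaplacian A ⊗ₖ (1 : Matrix (Fin m) (Fin m) ℝ) + blockDiag H)
              ((V₁ * Matrix.diagonal κ) ⊗ₖ (1 : Matrix (Fin m) (Fin m) ℝ))
              (-((Matrix.diagonal κ * V₁ᵀ) ⊗ₖ (1 : Matrix (Fin m) (Fin m) ℝ)))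
              0)).map (fun a : ℝ => (a : ℂ)))) z →
      z.re < 0 :=
  statement10_general A H hH hHsum V₁ κ hκ hVorth hVdiag
end

section
/- Let L̄ ∈ ℝ^{n×n} be the Laplacian of a symmetric nonnegative matrix with zero diagonal whose associated graph is connected, and let H_1, …, H_n ∈ ℝ^{m×m} be symmetric positive semidefinite matrices with ∑_{i=1}^n H_i positive definite. Then (L̄ ⊗ I_m) + diag(H_1,…,H_n) is symmetric positive definite. -/
open Matrix BigOperators
open scoped Kronecker

/-!
For `x = (x_1, …, x_n)` with `x_i ∈ ℝ^m`, the quadratic form of `L̄ ⊗ I_m + diag(H_i)` is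
`½ ∑_k ∑_{i,j} a_ij (x_ik - x_jk)² + ∑_i x_iᵀ H_i x_i`, a sum of nonnegative terms. If it
vanishes, the first part makes every coordinate `x_·k` constant along the edges, hence (by
connectivity) `x_i = v` for all `i`, and the second part becomes `vᵀ (∑ H_i) v`, which is
positive unless `v = 0`.
-/

lemma dotProduct_kronecker_one_mulVec {ι κ R : Type*} [Fintype ι] [Fintype κ] [DecidableEq κ]
    [Semiring R] (L : Matrix ι ι R) (x : ι × κ → R) :
    x ⬝ᵥ ((L ⊗ₖ (1 : Matrix κ κ R)) *ᵥ x) =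
      ∑ k, (fun i => x (i, k)) ⬝ᵥ (L *ᵥ fun i => x (i, k)) := by
  simp only [dotProduct, mulVec, kroneckerMap_apply, one_apply, Fintype.sum_prod_type,
    mul_ite, mul_one, mul_zero, ite_mul, zero_mul, Finset.sum_ite_eq, Finset.mem_univ, if_true]
  exact Finset.sum_comm

section Laplacian

variable {n : ℕ} {A : Matrix (Fin n) (Fin n) ℝ}

lemma graphLaplacian_isSymm (hA : A.IsSymm) : (graphLaplacian A).IsSymm :=
  (isSymm_diagonal _).sub hA

lemma two_mul_dotProduct_graphLaplacian_mulVec (hA : A.IsSymm) (y : Fin n → ℝ) :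
    2 * (y ⬝ᵥ (graphLaplacian A *ᵥ y)) = ∑ i, ∑ j, A i j * (y i - y j) ^ 2 := by
  have hswap : ∑ i, ∑ j, A i j * y j ^ 2 = ∑ i, ∑ j, A i j * y i ^ 2 := by
    rw [Finset.sum_comm]
    simp only [hA.apply]
  have hexpand : ∀ i j, A i j * (y i - y j) ^ 2
      = A i j * y i ^ 2 + A i j * y j ^ 2 - 2 * (y i * (A i j * y j)) := fun i j => by ring
  have hdiag :
      y ⬝ᵥ (diagonal (fun i => ∑ j, A i j) *ᵥ y) = ∑ i, ∑ j, A i j * y i ^ 2 := by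
    simp only [dotProduct, mulVec_diagonal, Finset.mul_sum, Finset.sum_mul]
    exact Fintype.sum_congr _ _ fun i => Fintype.sum_congr _ _ fun j => by ring
  have hadj : y ⬝ᵥ (A *ᵥ y) = ∑ i, ∑ j, y i * (A i j * y j) := by
    simp only [dotProduct, mulVec, Finset.mul_sum]
  simp only [graphLaplacian, sub_mulVec, dotProduct_sub, hdiag, hadj, hexpand,
    Finset.sum_sub_distrib, Finset.sum_add_distrib, hswap, ← Finset.mul_sum]
  ring

variable (hA : A.IsSymm) (hnn : ∀ i j, 0 ≤ A i j)
include hA hnn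

lemma dotProduct_graphLaplacian_mulVec_nonneg (y : Fin n → ℝ) :
    0 ≤ y ⬝ᵥ (graphLaplacian A *ᵥ y) := by
  have h := two_mul_dotProduct_graphLaplacian_mulVec hA y
  have : 0 ≤ ∑ i, ∑ j, A i j * (y i - y j) ^ 2 :=
    Fintype.sum_nonneg fun i => Fintype.sum_nonneg fun j => mul_nonneg (hnn i j) (sq_nonneg _)
  linarith

lemma graphLaplacian_posSemidef : (graphLaplacian A).PosSemidef :=
  posSemidef_iff_dotProduct_mulVec.2
    ⟨isHermitian_iff_isSymm.2 (graphLaplacian_isSymm hA),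
      dotProduct_graphLaplacian_mulVec_nonneg hA hnn⟩

lemma apply_eq_of_dotProduct_graphLaplacian_mulVec_eq_zero (hconn : graphConnected A)
    {y : Fin n → ℝ} (hy : y ⬝ᵥ (graphLaplacian A *ᵥ y) = 0) (i j : Fin n) :
    y i = y j := by
  have hterm_nonneg : ∀ a b, 0 ≤ A a b * (y a - y b) ^ 2 := fun a b =>
    mul_nonneg (hnn a b) (sq_nonneg _)
  have hsum : ∑ a, ∑ b, A a b * (y a - y b) ^ 2 = 0 := by
    rw [← two_mul_dotProduct_graphLaplacian_mulVec hA, hy, mul_zero]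
  have hterm : ∀ a b, A a b * (y a - y b) ^ 2 = 0 := fun a =>
    congrFun <| (Fintype.sum_eq_zero_iff_of_nonneg (hterm_nonneg a)).1 <| congrFun
      ((Fintype.sum_eq_zero_iff_of_nonneg fun a => Fintype.sum_nonneg (hterm_nonneg a)).1 hsum) a
  induction hconn i j with
  | refl => rfl
  | tail _ hedge ih =>
    obtain ⟨-, hpos⟩ := hedge
    have hsq := (mul_eq_zero.1 (hterm _ _)).resolve_left hpos.ne'
    exact ih.trans (sub_eq_zero.1 (pow_eq_zero_iff two_ne_zero |>.1 hsq))

lemma eq_comp_snd_of_dotProduct_graphLaplacian_kronecker_one_mulVec_eq_zero {κ : Type*}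
    [Fintype κ] [DecidableEq κ] (hconn : graphConnected A) {x : Fin n × κ → ℝ}
    (hx : x ⬝ᵥ ((graphLaplacian A ⊗ₖ (1 : Matrix κ κ ℝ)) *ᵥ x) = 0) (i : Fin n) :
    x = fun p => x (i, p.2) := by
  rw [dotProduct_kronecker_one_mulVec] at hx
  have hcol := (Fintype.sum_eq_zero_iff_of_nonneg fun k =>
    dotProduct_graphLaplacian_mulVec_nonneg hA hnn fun j => x (j, k)).1 hx
  funext ⟨j, k⟩
  exact apply_eq_of_dotProduct_graphLaplacian_mulVec_eq_zero hA hnn hconn (congrFun hcol k) j i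

end Laplacian

section BlockDiag

variable {n m : ℕ} (H : Fin n → Matrix (Fin m) (Fin m) ℝ)

lemma blockDiag_eq_submatrix_blockDiagonal :
    _root_.blockDiag H = (blockDiagonal H).submatrix Prod.swap Prod.swap := by
  ext ⟨i, k⟩ ⟨j, l⟩
  simp [_root_.blockDiag, blockDiagonal_apply]

lemma dotProduct_blockDiag_mulVec (x : Fin n × Fin m → ℝ) :
    x ⬝ᵥ (_root_.blockDiag H *ᵥ x) =
      ∑ i, (fun k => x (i, k)) ⬝ᵥ (H i *ᵥ fun k => x (i, k)) := by
  simp only [dotProduct, mulVec, _root_.blockDiag, Fintype.sum_prod_type, ite_mul, zero_mul,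
    Finset.sum_ite_irrel, Finset.sum_const_zero, Finset.sum_ite_eq, Finset.mem_univ, if_true]

lemma dotProduct_blockDiag_mulVec_comp_snd (v : Fin m → ℝ) :
    (fun p => v p.2) ⬝ᵥ (_root_.blockDiag H *ᵥ fun p => v p.2) =
      v ⬝ᵥ ((∑ i, H i) *ᵥ v) := by
  rw [dotProduct_blockDiag_mulVec, sum_mulVec, dotProduct_sum]

lemma blockDiag_posSemidef (hH : ∀ i, (H i).PosSemidef) : (_root_.blockDiag H).PosSemidef := by
  refine posSemidef_iff_dotProduct_mulVec.2 ⟨?_, fun x => ?_⟩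
  · rw [blockDiag_eq_submatrix_blockDiagonal]
    exact (isHermitian_blockDiagonal_iff.2 fun i => (hH i).isHermitian).submatrix _
  · rw [star_trivial, dotProduct_blockDiag_mulVec]
    exact Fintype.sum_nonneg fun i => by simpa using (hH i).dotProduct_mulVec_nonneg _

end BlockDiag

theorem statement11_general {n m : ℕ} (A : Matrix (Fin n) (Fin n) ℝ)
    (hsym : A.IsSymm) (hnn : ∀ i j, 0 ≤ A i j)
    (hconn : graphConnected A)
    (H : Fin n → Matrix (Fin m) (Fin m) ℝ)
    (hH : ∀ i, (H i).PosSemidef) (hHsum : (∑ i, H i).PosDef) :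
    (graphLaplacian A ⊗ₖ (1 : Matrix (Fin m) (Fin m) ℝ) + blockDiag H).PosDef := by
  have hK : (graphLaplacian A ⊗ₖ (1 : Matrix (Fin m) (Fin m) ℝ)).PosSemidef :=
    (graphLaplacian_posSemidef hsym hnn).kronecker PosSemidef.one
  have hB := blockDiag_posSemidef H hH
  refine posDef_iff_dotProduct_mulVec.2 ⟨hK.isHermitian.add hB.isHermitian, fun x hx => ?_⟩
  rw [star_trivial, add_mulVec, dotProduct_add]
  have hK_nonneg : 0 ≤ x ⬝ᵥ ((graphLaplacian A ⊗ₖ 1) *ᵥ x) := by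
    simpa using hK.dotProduct_mulVec_nonneg x
  have hB_nonneg : 0 ≤ x ⬝ᵥ (blockDiag H *ᵥ x) := by
    simpa using hB.dotProduct_mulVec_nonneg x
  refine (add_nonneg hK_nonneg hB_nonneg).lt_of_ne fun hzero => ?_
  obtain ⟨hK_zero, hB_zero⟩ := (add_eq_zero_iff_of_nonneg hK_nonneg hB_nonneg).1 hzero.symm
  obtain ⟨p, hp⟩ := Function.ne_iff.1 hx
  set v : Fin m → ℝ := fun k => x (p.1, k)
  have hxv : x = fun q => v q.2 :=
    eq_comp_snd_of_dotProduct_graphLaplacian_kronecker_one_mulVec_eq_zero hsym hnn hconn hK_zero p.1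
  have hv : v ≠ 0 := fun hv0 => hp (congrFun hv0 p.2)
  have hpos := hHsum.dotProduct_mulVec_pos hv
  rw [star_trivial, ← dotProduct_blockDiag_mulVec_comp_snd, ← hxv, hB_zero] at hpos
  exact hpos.false

theorem statement11 {n m : ℕ} (A : Matrix (Fin n) (Fin n) ℝ)
    (hsym : A.IsSymm) (hnn : ∀ i j, 0 ≤ A i j) (hdiag : ∀ i, A i i = 0)
    (hconn : graphConnected A)
    (H : Fin n → Matrix (Fin m) (Fin m) ℝ)
    (hH : ∀ i, (H i).PosSemidef) (hHsum : (∑ i, H i).PosDef) :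
    (graphLaplacian A ⊗ₖ (1 : Matrix (Fin m) (Fin m) ℝ) + blockDiag H).PosDef :=
  statement11_general A hsym hnn hconn H hH hHsum
end

section
/- Let Ω ⊂ ℝ^{nm} be a nonempty closed convex set, f̃ : ℝ^{nm} → ℝ convex differentiable, L̄ ∈ ℝ^{n×n} symmetric positive semidefinite, and let (X*, Λ*) ∈ Ω × ℝ^{nm} be a saddle point of Φ(X,Λ) = f̃(X) + Λᵀ(L̄ ⊗ I_m)X in Ω × ℝ^{nm} with (L̄ ⊗ I_m)X* = 0. Then for every X ∈ Ω, Λ ∈ ℝ^{nm}, and Z ∈ N_Ω(X): (X − X*)ᵀ( −∇f̃(X) − (L̄⊗I_m)(X + Λ) − Z ) + (Λ − Λ*)ᵀ (L̄⊗I_m) X ≤ Φ(X*, Λ*) − Φ(X, Λ*) − Xᵀ(L̄⊗I_m)X ≤ 0. -/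
open Matrix BigOperators
open scoped Kronecker RealInnerProductSpace

/-- Package a plain function as an element of Euclidean space. -/
noncomputable def euc {ι : Type*} [Fintype ι] (x : ι → ℝ) : EuclideanSpace ℝ ι :=
  (WithLp.equiv 2 (ι → ℝ)).symm x

/-- The action of `L̄ ⊗ I_m` on `ℝ^{nm}` (with the Euclidean structure). -/
noncomputable def kronAct {n m : ℕ} (Lbar : Matrix (Fin n) (Fin n) ℝ)
    (X : EuclideanSpace ℝ (Fin n × Fin m)) : EuclideanSpace ℝ (Fin n × Fin m) :=
  euc ((Lbar ⊗ₖ (1 : Matrix (Fin m) (Fin m) ℝ)).mulVec (fun p => X p))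

/-!
Write `K = L̄ ⊗ I_m`, a symmetric positive semidefinite operator. Since `K X* = 0`, every term
pairing `X*` with `K` vanishes, and the left-hand side equals the middle expression plus
`⟪∇f̃(X), X* - X⟫ + f̃(X) - f̃(X*)` and `⟪Z, X* - X⟫`. The first is `≤ 0` by the gradient inequality
of the convex function `f̃`, the second because `Z` is normal to `Ω` at `X`. The middle expression
is `≤ 0` by the saddle inequality `Φ(X*, Λ*) ≤ Φ(X, Λ*)` and `⟪X, K X⟫ ≥ 0`.
-/

theorem ConvexOn.add_inner_sub_le_of_hasGradientAt {E : Type*} [NormedAddCommGroup E]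
    [InnerProductSpace ℝ E] [CompleteSpace E] {s : Set E} {f : E → ℝ} (hf : ConvexOn ℝ s f)
    {g x y : E} (hx : x ∈ s) (hy : y ∈ s) (hg : HasGradientAt f g x) :
    f x + ⟪g, y - x⟫ ≤ f y := by
  have hline : HasDerivAt (AffineMap.lineMap x y) (y - x) (0 : ℝ) := AffineMap.hasDerivAt_lineMap
  have hf' : HasFDerivAt f (InnerProductSpace.toDual ℝ E g) (AffineMap.lineMap x y (0 : ℝ)) := by
    simpa using hasGradientAt_iff_hasFDerivAt.mp hg
  have hslope := (hf.comp_affineMap (AffineMap.lineMap x y)).le_slope_of_hasDerivAt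
    (by simpa using hx) (by simpa using hy) zero_lt_one (hf'.comp_hasDerivAt 0 hline)
  simp only [InnerProductSpace.toDual_apply_apply, slope_def_field, Function.comp_apply,
    AffineMap.lineMap_apply_one, AffineMap.lineMap_apply_zero, sub_zero, div_one] at hslope
  linarith

theorem inner_primalDual_le_lagrangian_sub {E : Type*} [NormedAddCommGroup E]
    [InnerProductSpace ℝ E] [CompleteSpace E] {s : Set E} {K : E →ₗ[ℝ] E} (hK : K.IsSymmetric)
    {f : E → ℝ} (hf : ConvexOn ℝ s f) {g x xs lam lams z : E} (hx : x ∈ s) (hxs : xs ∈ s)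
    (hg : HasGradientAt f g x) (hKxs : K xs = 0) (hz : ⟪z, xs - x⟫ ≤ 0) :
    ⟪x - xs, -g - K (x + lam) - z⟫ + ⟪lam - lams, K x⟫ ≤
      (f xs + ⟪lams, K xs⟫) - (f x + ⟪lams, K x⟫) - ⟪x, K x⟫ := by
  have hgrad := hf.add_inner_sub_le_of_hasGradientAt hx hxs hg
  have hxs_K : ∀ y, ⟪xs, K y⟫ = 0 := fun y => by rw [← hK, hKxs, inner_zero_left]
  have hcomm : ⟪x, K lam⟫ = ⟪lam, K x⟫ := by rw [← hK, real_inner_comm]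
  simp only [map_add, inner_sub_left, inner_sub_right, inner_add_right, inner_neg_right, hKxs,
    inner_zero_right, hxs_K, hcomm, real_inner_comm g, real_inner_comm z] at hgrad hz ⊢
  linarith

theorem kronAct_eq_toEuclideanLin {n m : ℕ} (L : Matrix (Fin n) (Fin n) ℝ)
    (X : EuclideanSpace ℝ (Fin n × Fin m)) :
    kronAct L X = (L ⊗ₖ (1 : Matrix (Fin m) (Fin m) ℝ)).toEuclideanLin X := rfl

theorem statement16_general {n m : ℕ}
    (Ω : Set (EuclideanSpace ℝ (Fin n × Fin m)))
    (ftil : EuclideanSpace ℝ (Fin n × Fin m) → ℝ)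
    (hconv : ConvexOn ℝ Set.univ ftil)
    (Df : EuclideanSpace ℝ (Fin n × Fin m) → EuclideanSpace ℝ (Fin n × Fin m))
    (hdiff : ∀ X, HasGradientAt ftil (Df X) X)
    (Lbar : Matrix (Fin n) (Fin n) ℝ) (hLbar : Lbar.PosSemidef)
    (Xs Λs : EuclideanSpace ℝ (Fin n × Fin m))
    (hXsΩ : Xs ∈ Ω) (hXsker : kronAct Lbar Xs = 0)
    -- (Xs, Λs) is a saddle point of Φ(X,Λ) = f̃(X) + Λᵀ(L̄⊗I_m)X in Ω × ℝ^{nm}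
    (hsaddle : ∀ X ∈ Ω, ∀ Λ : EuclideanSpace ℝ (Fin n × Fin m),
        ftil Xs + ⟪Λ, kronAct Lbar Xs⟫ ≤ ftil Xs + ⟪Λs, kronAct Lbar Xs⟫ ∧
          ftil Xs + ⟪Λs, kronAct Lbar Xs⟫ ≤ ftil X + ⟪Λs, kronAct Lbar X⟫) :
    ∀ X ∈ Ω, ∀ Λ Z : EuclideanSpace ℝ (Fin n × Fin m),
      (∀ y ∈ Ω, ⟪Z, y - X⟫ ≤ 0) →
      ⟪X - Xs, -Df X - kronAct Lbar (X + Λ) - Z⟫ + ⟪Λ - Λs, kronAct Lbar X⟫ ≤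
          (ftil Xs + ⟪Λs, kronAct Lbar Xs⟫) - (ftil X + ⟪Λs, kronAct Lbar X⟫) -
            ⟪X, kronAct Lbar X⟫ ∧
        (ftil Xs + ⟪Λs, kronAct Lbar Xs⟫) - (ftil X + ⟪Λs, kronAct Lbar X⟫) -
            ⟪X, kronAct Lbar X⟫ ≤ 0 := by
  intro X hX Λ Z hZ
  have hK : (Lbar ⊗ₖ (1 : Matrix (Fin m) (Fin m) ℝ)).toEuclideanLin.IsPositive :=
    Matrix.isPositive_toEuclideanLin_iff.mpr (hLbar.kronecker PosSemidef.one)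
  simp only [kronAct_eq_toEuclideanLin] at hXsker hsaddle ⊢
  exact ⟨inner_primalDual_le_lagrangian_sub hK.isSymmetric hconv (Set.mem_univ X)
      (Set.mem_univ Xs) (hdiff X) hXsker (hZ Xs hXsΩ),
    by linarith [(hsaddle X hX Λ).2, hK.inner_nonneg_right X]⟩

theorem statement16 {n m : ℕ}
    (Ω : Set (EuclideanSpace ℝ (Fin n × Fin m)))
    (hΩne : Ω.Nonempty) (hΩclosed : IsClosed Ω) (hΩconv : Convex ℝ Ω)
    (ftil : EuclideanSpace ℝ (Fin n × Fin m) → ℝ)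
    (hconv : ConvexOn ℝ Set.univ ftil)
    (Df : EuclideanSpace ℝ (Fin n × Fin m) → EuclideanSpace ℝ (Fin n × Fin m))
    (hdiff : ∀ X, HasGradientAt ftil (Df X) X)
    (Lbar : Matrix (Fin n) (Fin n) ℝ) (hLbar : Lbar.PosSemidef)
    (Xs Λs : EuclideanSpace ℝ (Fin n × Fin m))
    (hXsΩ : Xs ∈ Ω) (hXsker : kronAct Lbar Xs = 0)
    -- (Xs, Λs) is a saddle point of Φ(X,Λ) = f̃(X) + Λᵀ(L̄⊗I_m)X in Ω × ℝ^{nm}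
    (hsaddle : ∀ X ∈ Ω, ∀ Λ : EuclideanSpace ℝ (Fin n × Fin m),
        ftil Xs + ⟪Λ, kronAct Lbar Xs⟫ ≤ ftil Xs + ⟪Λs, kronAct Lbar Xs⟫ ∧
          ftil Xs + ⟪Λs, kronAct Lbar Xs⟫ ≤ ftil X + ⟪Λs, kronAct Lbar X⟫) :
    ∀ X ∈ Ω, ∀ Λ Z : EuclideanSpace ℝ (Fin n × Fin m),
      (∀ y ∈ Ω, ⟪Z, y - X⟫ ≤ 0) →
      ⟪X - Xs, -Df X - kronAct Lbar (X + Λ) - Z⟫ + ⟪Λ - Λs, kronAct Lbar X⟫ ≤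
          (ftil Xs + ⟪Λs, kronAct Lbar Xs⟫) - (ftil X + ⟪Λs, kronAct Lbar X⟫) -
            ⟪X, kronAct Lbar X⟫ ∧
        (ftil Xs + ⟪Λs, kronAct Lbar Xs⟫) - (ftil X + ⟪Λs, kronAct Lbar X⟫) -
            ⟪X, kronAct Lbar X⟫ ≤ 0 :=
  statement16_general Ω ftil hconv Df hdiff Lbar hLbar Xs Λs hXsΩ hXsker hsaddle
end

section
/- Let Ω_i ⊂ ℝ^m (i = 1,…,n) be closed convex sets with Ω = ∏_i Ω_i, let f_i : ℝ^m → ℝ be convex, let L̄ be the Laplacian of a symmetric nonnegative matrix with zero diagonal whose associated graph is connected, let Φ(X,Λ) = f̃(X) + Λᵀ(L̄⊗I_m)X with f̃(X) = ∑_i f_i(x_i), and let (X*, Λ*) be a saddle point of Φ in Ω × ℝ^{mn}. Then the set S = {(X, Λ) ∈ Ω × ℝ^{mn} : Xᵀ(L̄⊗I_m)X = 0 and Φ(X, Λ*) = Φ(X*, Λ*)} equals {(𝟏 ⊗ x, Λ) : x ∈ Ω_o*, Λ ∈ ℝ^{mn}}, where Ω_o* is the set of minimizers of ∑_i f_i over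 ⋂_i Ω_i. -/
open Matrix BigOperators
open scoped Kronecker

/-- Membership of the stacked vector `X` in the Cartesian product `Ω = ∏ᵢ Ωᵢ`. -/
def memProd {n m : ℕ} (C : Fin n → Set (Fin m → ℝ)) (X : Fin n × Fin m → ℝ) : Prop :=
  ∀ i, (fun j => X (i, j)) ∈ C i

/-- The Lagrangian `Φ(X, Λ) = f̃(X) + Λᵀ (L̄ ⊗ I_m) X`. -/
noncomputable def lagrangian {n m : ℕ} (f : Fin n → (Fin m → ℝ) → ℝ)
    (A : Matrix (Fin n) (Fin n) ℝ) (X Λ : Fin n × Fin m → ℝ) : ℝ :=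
  (∑ i, f i (fun j => X (i, j))) +
    Λ ⬝ᵥ ((graphLaplacian A ⊗ₖ (1 : Matrix (Fin m) (Fin m) ℝ)).mulVec X)

section Aux

variable {n m : ℕ}

lemma lap_rowsum (A : Matrix (Fin n) (Fin n) ℝ) (i : Fin n) :
    ∑ k, graphLaplacian A i k = 0 := by
  simp [graphLaplacian, Matrix.diagonal_apply, Finset.sum_sub_distrib]

lemma kron_mulVec (A : Matrix (Fin n) (Fin n) ℝ) (X : Fin n × Fin m → ℝ) (i : Fin n) (j : Fin m) :
    ((graphLaplacian A ⊗ₖ (1 : Matrix (Fin m) (Fin m) ℝ)).mulVec X) (i, j)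
      = ∑ k, graphLaplacian A i k * X (k, j) := by
  simp [Matrix.mulVec, dotProduct, Fintype.sum_prod_type, Matrix.one_apply,
    mul_ite, ite_mul, Finset.sum_ite_eq, Finset.sum_ite_eq']

lemma quad_split (A : Matrix (Fin n) (Fin n) ℝ) (X : Fin n × Fin m → ℝ) :
    X ⬝ᵥ ((graphLaplacian A ⊗ₖ (1 : Matrix (Fin m) (Fin m) ℝ)).mulVec X)
      = ∑ j, (fun i => X (i, j)) ⬝ᵥ (graphLaplacian A).mulVec (fun i => X (i, j)) := by
  simp only [dotProduct, Matrix.mulVec, Fintype.sum_prod_type, Matrix.kroneckerMap_apply,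
    Matrix.one_apply, mul_ite, ite_mul, mul_one, mul_zero, zero_mul, Finset.sum_ite_eq,
    Finset.sum_ite_eq', Finset.mem_univ, if_true]
  rw [Finset.sum_comm]

lemma quad_formula (A : Matrix (Fin n) (Fin n) ℝ) (hsym : A.IsSymm) (v : Fin n → ℝ) :
    2 * (v ⬝ᵥ (graphLaplacian A).mulVec v)
      = ∑ i, ∑ k, A i k * (v i - v k) ^ 2 := by
  have hS3 : (∑ i, ∑ k, A i k * v k ^ 2) = ∑ i, ∑ k, A i k * v i ^ 2 := by
    rw [Finset.sum_comm]
    exact Finset.sum_congr rfl fun a _ => Finset.sum_congr rfl fun b _ => by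
      rw [hsym.apply]
  have lhs : v ⬝ᵥ (graphLaplacian A).mulVec v
      = (∑ i, ∑ k, A i k * v i ^ 2) - ∑ i, ∑ k, A i k * (v i * v k) := by
    simp only [dotProduct, Matrix.mulVec, graphLaplacian, Matrix.sub_apply,
      Matrix.diagonal_apply, ite_mul, zero_mul, sub_mul, mul_sub,
      Finset.sum_sub_distrib, Finset.sum_ite_eq, Finset.mem_univ, if_true,
      Finset.mul_sum, Finset.sum_mul]
    congr 1
    · refine Finset.sum_congr rfl fun i _ => Finset.sum_congr rfl fun k _ => by ring
    · refine Finset.sum_congr rfl fun i _ => Finset.sum_congr rfl fun k _ => by ring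
  have rhs : (∑ i, ∑ k, A i k * (v i - v k) ^ 2)
      = ((∑ i, ∑ k, A i k * v i ^ 2) + ∑ i, ∑ k, A i k * v k ^ 2)
        - 2 * ∑ i, ∑ k, A i k * (v i * v k) := by
    rw [Finset.mul_sum, ← Finset.sum_add_distrib, ← Finset.sum_sub_distrib]
    refine Finset.sum_congr rfl fun i _ => ?_
    rw [Finset.mul_sum, ← Finset.sum_add_distrib, ← Finset.sum_sub_distrib]
    exact Finset.sum_congr rfl fun k _ => by ring
  rw [lhs, rhs, hS3]; ring

lemma quad_col_nonneg (A : Matrix (Fin n) (Fin n) ℝ) (hsym : A.IsSymm)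
    (hnn : ∀ i j, 0 ≤ A i j) (v : Fin n → ℝ) :
    0 ≤ v ⬝ᵥ (graphLaplacian A).mulVec v := by
  have h := quad_formula A hsym v
  nlinarith [Finset.sum_nonneg (fun i (_ : i ∈ Finset.univ) =>
    Finset.sum_nonneg (fun k (_ : k ∈ Finset.univ) =>
      mul_nonneg (hnn i k) (sq_nonneg (v i - v k))))]

lemma consensus (A : Matrix (Fin n) (Fin n) ℝ) (hsym : A.IsSymm)
    (hnn : ∀ i j, 0 ≤ A i j) (hconn : graphConnected A)
    (X : Fin n × Fin m → ℝ)
    (hq : X ⬝ᵥ ((graphLaplacian A ⊗ₖ (1 : Matrix (Fin m) (Fin m) ℝ)).mulVec X) = 0) :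
    ∀ i k j, X (i, j) = X (k, j) := by
  rw [quad_split] at hq
  have hcol : ∀ j, (fun i => X (i, j)) ⬝ᵥ (graphLaplacian A).mulVec (fun i => X (i, j)) = 0 := by
    have := (Finset.sum_eq_zero_iff_of_nonneg
      (fun j (_ : j ∈ Finset.univ) => quad_col_nonneg A hsym hnn (fun i => X (i, j)))).mp hq
    exact fun j => this j (Finset.mem_univ j)
  have edge : ∀ i k, 0 < A i k → ∀ j, X (i, j) = X (k, j) := by
    intro i k hik j
    have h0 : (∑ a, ∑ b, A a b * (X (a, j) - X (b, j)) ^ 2) = 0 := by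
      rw [← quad_formula A hsym (fun i => X (i, j)), hcol j, mul_zero]
    have hterm := (Finset.sum_eq_zero_iff_of_nonneg
      (fun a (_ : a ∈ Finset.univ) => Finset.sum_nonneg
        (fun b (_ : b ∈ Finset.univ) => mul_nonneg (hnn a b) (sq_nonneg _)))).mp h0
      i (Finset.mem_univ i)
    have hterm2 := (Finset.sum_eq_zero_iff_of_nonneg
      (fun b (_ : b ∈ Finset.univ) => mul_nonneg (hnn i b) (sq_nonneg _))).mp hterm
      k (Finset.mem_univ k)
    have : (X (i, j) - X (k, j)) ^ 2 = 0 := by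
      rcases mul_eq_zero.mp hterm2 with h | h
      · exact absurd h (ne_of_gt hik)
      · exact h
    have := (pow_eq_zero_iff two_ne_zero).mp this
    linarith [sub_eq_zero.mp this]
  intro i k j
  induction hconn i k with
  | refl => rfl
  | tail _ h2 ih => exact ih.trans (edge _ _ h2.2 j)

lemma const_mulVec_zero (A : Matrix (Fin n) (Fin n) ℝ) (x : Fin m → ℝ) :
    (graphLaplacian A ⊗ₖ (1 : Matrix (Fin m) (Fin m) ℝ)).mulVec (fun p => x p.2) = 0 := by
  funext p
  obtain ⟨i, j⟩ := p
  rw [kron_mulVec]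
  simp only [← Finset.sum_mul]
  rw [lap_rowsum]
  simp

lemma lagrangian_const (f : Fin n → (Fin m → ℝ) → ℝ) (A : Matrix (Fin n) (Fin n) ℝ)
    (x : Fin m → ℝ) (Λ : Fin n × Fin m → ℝ) :
    lagrangian f A (fun p => x p.2) Λ = ∑ i, f i x := by
  simp [lagrangian, const_mulVec_zero]

end Aux

theorem statement17 {n m : ℕ}
    (C : Fin n → Set (Fin m → ℝ))
    (hCclosed : ∀ i, IsClosed (C i)) (hCconv : ∀ i, Convex ℝ (C i))
    (f : Fin n → (Fin m → ℝ) → ℝ) (hfconv : ∀ i, ConvexOn ℝ Set.univ (f i))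
    (A : Matrix (Fin n) (Fin n) ℝ)
    (hsym : A.IsSymm) (hnn : ∀ i j, 0 ≤ A i j) (hdiag : ∀ i, A i i = 0)
    (hconn : graphConnected A)
    (Xs Λs : Fin n × Fin m → ℝ)
    -- (Xs, Λs) is a saddle point of Φ in Ω × ℝ^{mn}
    (hXs : memProd C Xs)
    (hsaddle : ∀ X : Fin n × Fin m → ℝ, memProd C X → ∀ Λ : Fin n × Fin m → ℝ,
        lagrangian f A Xs Λ ≤ lagrangian f A Xs Λs ∧
          lagrangian f A Xs Λs ≤ lagrangian f A X Λs) :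
    {XΛ : (Fin n × Fin m → ℝ) × (Fin n × Fin m → ℝ) |
        memProd C XΛ.1 ∧
          XΛ.1 ⬝ᵥ ((graphLaplacian A ⊗ₖ (1 : Matrix (Fin m) (Fin m) ℝ)).mulVec XΛ.1) = 0 ∧
          lagrangian f A XΛ.1 Λs = lagrangian f A Xs Λs}
      = {XΛ : (Fin n × Fin m → ℝ) × (Fin n × Fin m → ℝ) |
          ∃ x : Fin m → ℝ,
            ((∀ i, x ∈ C i) ∧ ∀ y : Fin m → ℝ, (∀ i, y ∈ C i) →
              ∑ i, f i x ≤ ∑ i, f i y) ∧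
            XΛ.1 = fun p => x p.2} := by
  rcases Nat.eq_zero_or_pos n with hn | hn
  · subst hn
    ext ⟨X, Λ⟩
    simp only [Set.mem_setOf_eq]
    constructor
    · intro _
      exact ⟨0, ⟨fun i => i.elim0, fun y _ => by simp⟩, funext fun p => p.1.elim0⟩
    · intro _
      refine ⟨fun i => i.elim0, ?_, ?_⟩
      · simp [dotProduct]
      · simp [lagrangian, dotProduct]
  -- main case
  set L1 := graphLaplacian A ⊗ₖ (1 : Matrix (Fin m) (Fin m) ℝ) with hL1
  set w := L1.mulVec Xs with hwdef
  have hw : w = 0 := by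
    have hle : ∀ Λ : Fin n × Fin m → ℝ, Λ ⬝ᵥ w ≤ Λs ⬝ᵥ w := by
      intro Λ
      have h := (hsaddle Xs hXs Λ).1
      simp only [lagrangian, ← hwdef, ← hL1] at h
      linarith
    funext p
    have h2 := hle (Λs + Pi.single p (w p))
    rw [add_dotProduct, single_dotProduct] at h2
    have : w p * w p ≤ 0 := by linarith
    show w p = 0
    nlinarith [mul_self_nonneg (w p)]
  -- Xs is a consensus
  have hXsq : Xs ⬝ᵥ L1.mulVec Xs = 0 := by rw [← hwdef, hw]; simp [dotProduct]
  have hXsc := consensus A hsym hnn hconn Xs hXsq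
  set i0 : Fin n := ⟨0, hn⟩
  set xstar : Fin m → ℝ := fun j => Xs (i0, j) with hxstar
  have hXseq : Xs = fun p => xstar p.2 := funext fun p => hXsc p.1 i0 p.2
  have hxstarC : ∀ i, xstar ∈ C i := by
    intro i
    have h := hXs i
    have : (fun j => Xs (i, j)) = xstar := funext fun j => hXsc i i0 j
    rwa [this] at h
  have hlagXs : lagrangian f A Xs Λs = ∑ i, f i xstar := by
    rw [hXseq]; exact lagrangian_const f A xstar Λs
  have hmin : ∀ y : Fin m → ℝ, (∀ i, y ∈ C i) → ∑ i, f i xstar ≤ ∑ i, f i y := by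
    intro y hy
    have hmem : memProd C (fun p => y p.2) := fun i => hy i
    have h := (hsaddle (fun p => y p.2) hmem Λs).2
    rwa [hlagXs, lagrangian_const] at h
  ext ⟨X, Λ⟩
  simp only [Set.mem_setOf_eq]
  constructor
  · rintro ⟨hm, hq, he⟩
    have hc := consensus A hsym hnn hconn X hq
    set x : Fin m → ℝ := fun j => X (i0, j) with hxd
    have hXeq : X = fun p => x p.2 := funext fun p => hc p.1 i0 p.2
    have hxC : ∀ i, x ∈ C i := by
      intro i
      have h := hm i
      have : (fun j => X (i, j)) = x := funext fun j => hc i i0 j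
      rwa [this] at h
    refine ⟨x, ⟨hxC, ?_⟩, hXeq⟩
    intro y hy
    have hval : lagrangian f A X Λs = ∑ i, f i x := by
      rw [hXeq]; exact lagrangian_const f A x Λs
    have : (∑ i, f i x) = ∑ i, f i xstar := by rw [← hval, he, hlagXs]
    rw [this]
    exact hmin y hy
  · rintro ⟨x, ⟨hxC, hxmin⟩, hXeq⟩
    have hmem : memProd C X := by
      intro i
      rw [hXeq]
      exact hxC i
    refine ⟨hmem, ?_, ?_⟩
    · rw [hXeq]
      rw [const_mulVec_zero]
      simp [dotProduct]
    · rw [hXeq, lagrangian_const, hlagXs]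
      exact le_antisymm (hxmin xstar hxstarC) (hmin x hxC)
end

section
/- Let (Ω, F, P) be a probability space and F_0 ⊂ F_1 ⊂ ⋯ a sequence of sub-σ-algebras of F. Let {d_k} and {w_k} be nonnegative F_k-measurable random variables such that E[d_{k+1} | F_k] ≤ (1 + α_k) d_k + w_k almost surely, where α_k ≥ 0 are constants with ∑_{k=1}^∞ α_k < ∞. If ∑_{k=1}^∞ w_k < ∞ almost surely, then {d_k} converges almost surely (to a finite limit). -/
/-!
Dividing by the growth factor `β n = ∏_{j<n} (1 + α j)` absorbs the multiplicative slack of the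
recursion: with `S n = ∑_{j<n} w j / β (j + 1)`, the process `S n - d n / β n` is a submartingale
bounded above by the nondecreasing predictable process `S`. Freezing it as soon as `S` would exceed
a level `M` gives a submartingale bounded above by an integrable function, hence bounded in `L¹`
and a.e. convergent. Since `S ≤ ∑ w k < ∞` a.s., almost every path is never frozen at a large
enough integer level, so `S n - d n / β n` converges a.s.; so do `S n` (monotone and bounded) and
`β n` (because `∑ α k < ∞`), hence so does `d n`.
-/

open MeasureTheory Filter Topology

section Freeze

variable {a s : ℕ → ℝ} {M : ℝ}

theorem sum_ite_le_mul_sub_eq_sub (hs : Monotone s) {n : ℕ} (hn : s n ≤ M) :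
    ∑ k ∈ Finset.range n, (if s (k + 1) ≤ M then 1 else 0) * (a (k + 1) - a k) = a n - a 0 := by
  rw [← Finset.sum_range_sub]
  refine Finset.sum_congr rfl fun k hk => ?_
  rw [if_pos ((hs (Finset.mem_range.1 hk)).trans hn), one_mul]

theorem sum_ite_le_mul_sub_le (hs : Monotone s) (has : ∀ n, a n ≤ s n) (hM : 0 ≤ M) (n : ℕ) :
    ∑ k ∈ Finset.range n, (if s (k + 1) ≤ M then 1 else 0) * (a (k + 1) - a k) ≤ M + |a 0| := by
  induction n with
  | zero => simpa using hM.trans (le_add_of_nonneg_right (abs_nonneg _))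
  | succ n ih =>
    by_cases hn : s (n + 1) ≤ M
    · rw [sum_ite_le_mul_sub_eq_sub hs hn]
      linarith [has (n + 1), neg_abs_le (a 0)]
    · rwa [Finset.sum_range_succ, if_neg hn, zero_mul, add_zero]

end Freeze

namespace MeasureTheory

variable {Ω : Type*} {m0 : MeasurableSpace Ω} {μ : Measure Ω} {ℱ : Filtration ℕ m0}

theorem condExp_sub_div_const_of_stronglyMeasurable {m : MeasurableSpace Ω} (hm : m ≤ m0)
    [SigmaFinite (μ.trim hm)] {g h : Ω → ℝ} (hg : StronglyMeasurable[m] g)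
    (hgint : Integrable g μ) (hhint : Integrable h μ) (c : ℝ) :
    μ[fun ω => g ω - h ω / c|m] =ᵐ[μ] fun ω => g ω - μ[h|m] ω / c := by
  have hsmul : (fun ω => g ω - h ω / c) = g - c⁻¹ • h := by
    ext ω; simp [div_eq_inv_mul]
  rw [hsmul]
  filter_upwards [condExp_sub hgint (hhint.smul c⁻¹) m, condExp_smul (μ := μ) c⁻¹ h m]
    with ω hsub hsmul
  rw [hsub, Pi.sub_apply, hsmul, condExp_of_stronglyMeasurable hm hg hgint]
  simp [div_eq_inv_mul]

theorem Submartingale.ae_exists_tendsto_of_le_integrable [IsFiniteMeasure μ]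
    {f : ℕ → Ω → ℝ} {Z : Ω → ℝ} (hf : Submartingale f ℱ μ) (hZ : Integrable Z μ)
    (hfZ : ∀ n, ∀ᵐ ω ∂μ, f n ω ≤ Z ω) :
    ∀ᵐ ω ∂μ, ∃ c, Tendsto (fun n => f n ω) atTop (𝓝 c) := by
  refine hf.exists_ae_tendsto_of_bdd (R := (2 * ∫ ω, |Z ω| ∂μ - ∫ ω, f 0 ω ∂μ).toNNReal)
    fun n => ?_
  have hfn := hf.integrable n
  have hmono : ∫ ω, f 0 ω ∂μ ≤ ∫ ω, f n ω ∂μ := by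
    simpa using hf.setIntegral_le n.zero_le MeasurableSet.univ
  have habs : ∫ ω, |f n ω| ∂μ ≤ ∫ ω, (2 * |Z ω| - f n ω) ∂μ := by
    refine integral_mono_ae hfn.abs ((hZ.abs.const_mul 2).sub hfn) ?_
    filter_upwards [hfZ n] with ω hω
    cases abs_cases (f n ω) <;> cases abs_cases (Z ω) <;> linarith
  rw [integral_sub (hZ.abs.const_mul 2) hfn, integral_const_mul] at habs
  rw [eLpNorm_one_eq_lintegral_enorm, ← ofReal_integral_norm_eq_lintegral_enorm hfn,
    ENNReal.ofReal_le_iff_le_toReal ENNReal.coe_ne_top, ENNReal.coe_toReal]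
  simp only [Real.norm_eq_abs]
  exact habs.trans ((by linarith : _ ≤ _).trans (Real.le_coe_toNNReal _))

theorem Submartingale.ae_exists_tendsto_of_le_predictable [IsFiniteMeasure μ]
    {f S : ℕ → Ω → ℝ} (hf : Submartingale f ℱ μ) (hS : StronglyAdapted ℱ fun n => S (n + 1))
    (hSmono : ∀ ω, Monotone fun n => S n ω) (hfS : ∀ n ω, f n ω ≤ S n ω)
    (hSbdd : ∀ᵐ ω ∂μ, BddAbove (Set.range fun n => S n ω)) :
    ∀ᵐ ω ∂μ, ∃ c, Tendsto (fun n => f n ω) atTop (𝓝 c) := by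
  set ξ : ℝ → ℕ → Ω → ℝ := fun M k ω => if S (k + 1) ω ≤ M then 1 else 0
  set g : ℝ → ℕ → Ω → ℝ := fun M n => ∑ k ∈ Finset.range n, ξ M k * (f (k + 1) - f k)
  have hg : ∀ M : ℕ, ∀ᵐ ω ∂μ, ∃ c, Tendsto (fun n => g M n ω) atTop (𝓝 c) := by
    intro M
    have hξ : StronglyAdapted ℱ (ξ M) := fun k =>
      (Measurable.ite (measurableSet_le (hS k).measurable measurable_const)
        measurable_const measurable_const).stronglyMeasurable
    have hgsub : Submartingale (g M) ℱ μ :=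
      hf.sum_mul_sub hξ (R := 1) (fun _ _ => by dsimp [ξ]; split_ifs <;> norm_num)
        (fun _ _ => by dsimp [ξ]; split_ifs <;> norm_num)
    refine hgsub.ae_exists_tendsto_of_le_integrable
      ((integrable_const (M : ℝ)).add (hf.integrable 0).abs) fun n => ae_of_all _ fun ω => ?_
    simpa [g, ξ, Finset.sum_apply] using
      sum_ite_le_mul_sub_le (hSmono ω) (fun n => hfS n ω) M.cast_nonneg n
  filter_upwards [ae_all_iff.2 hg, hSbdd] with ω hgω ⟨B, hB⟩
  obtain ⟨M, hM⟩ := exists_nat_ge B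
  obtain ⟨c, hc⟩ := hgω M
  refine ⟨f 0 ω + c, (tendsto_const_nhds.add hc).congr fun n => ?_⟩
  have hfreeze := sum_ite_le_mul_sub_eq_sub (a := fun n => f n ω) (hSmono ω)
    ((hB ⟨n, rfl⟩).trans hM)
  simp only [g, ξ, Finset.sum_apply, Pi.mul_apply, Pi.sub_apply] at hfreeze ⊢
  rw [hfreeze]
  ring

end MeasureTheory

noncomputable def growthFactor (α : ℕ → ℝ) (k : ℕ) : ℝ := ∏ j ∈ Finset.range k, (1 + α j)

noncomputable def discountedNoise {Ω : Type*} (α : ℕ → ℝ) (w : ℕ → Ω → ℝ) (n : ℕ) (ω : Ω) : ℝ :=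
  ∑ j ∈ Finset.range n, w j ω / growthFactor α (j + 1)

section GrowthFactor

variable {α : ℕ → ℝ}

theorem growthFactor_succ (k : ℕ) : growthFactor α (k + 1) = growthFactor α k * (1 + α k) :=
  Finset.prod_range_succ _ k

theorem one_le_growthFactor (hα : ∀ k, 0 ≤ α k) (k : ℕ) : 1 ≤ growthFactor α k :=
  Finset.one_le_prod fun j _ => le_add_of_nonneg_right (hα j)

theorem growthFactor_pos (hα : ∀ k, 0 ≤ α k) (k : ℕ) : 0 < growthFactor α k :=
  one_pos.trans_le (one_le_growthFactor hα k)

theorem exists_tendsto_growthFactor (hα : Summable α) :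
    ∃ B, Tendsto (growthFactor α) atTop (𝓝 B) :=
  ⟨_, (Real.multipliable_one_add_of_summable hα).hasProd.tendsto_prod_nat⟩

end GrowthFactor

section DiscountedNoise

variable {Ω : Type*} {α : ℕ → ℝ} {w : ℕ → Ω → ℝ}

theorem discountedNoise_succ (n : ℕ) (ω : Ω) :
    discountedNoise α w (n + 1) ω = discountedNoise α w n ω + w n ω / growthFactor α (n + 1) :=
  Finset.sum_range_succ _ n

theorem monotone_discountedNoise (hα : ∀ k, 0 ≤ α k) {ω : Ω} (hw : ∀ k, 0 ≤ w k ω) :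
    Monotone fun n => discountedNoise α w n ω :=
  monotone_nat_of_le_succ fun n => by
    rw [discountedNoise_succ]
    exact le_add_of_nonneg_right (div_nonneg (hw n) (growthFactor_pos hα _).le)

theorem discountedNoise_le_tsum (hα : ∀ k, 0 ≤ α k) {ω : Ω} (hw : ∀ k, 0 ≤ w k ω)
    (hsum : Summable fun k => w k ω) (n : ℕ) : discountedNoise α w n ω ≤ ∑' k, w k ω :=
  calc discountedNoise α w n ω ≤ ∑ j ∈ Finset.range n, w j ω :=
        Finset.sum_le_sum fun j _ => div_le_self (hw j) (one_le_growthFactor hα _)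
    _ ≤ ∑' k, w k ω := hsum.sum_le_tsum _ fun k _ => hw k

variable [m0 : MeasurableSpace Ω] {ℱ : Filtration ℕ m0}

theorem measurable_discountedNoise (hw : Adapted ℱ w) {n m : ℕ} (hnm : n ≤ m + 1) :
    Measurable[ℱ m] (discountedNoise α w n) :=
  Finset.measurable_sum _ fun j hj =>
    ((hw j).mono (ℱ.mono (Nat.lt_succ_iff.1 ((Finset.mem_range.1 hj).trans_le hnm)))
      le_rfl).div_const _

theorem integrable_discountedNoise {μ : Measure Ω} (hw : ∀ k, Integrable (w k) μ) (n : ℕ) :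
    Integrable (discountedNoise α w n) μ :=
  integrable_finsetSum _ fun j _ => (hw j).div_const _

theorem submartingale_discountedNoise_sub {μ : Measure Ω} [IsFiniteMeasure μ] {d : ℕ → Ω → ℝ}
    (hα : ∀ k, 0 ≤ α k) (hd : Adapted ℱ d) (hw : Adapted ℱ w)
    (hdint : ∀ k, Integrable (d k) μ) (hwint : ∀ k, Integrable (w k) μ)
    (hrec : ∀ k, μ[d (k + 1)|ℱ k] ≤ᵐ[μ] fun ω => (1 + α k) * d k ω + w k ω) :
    Submartingale (fun n ω => discountedNoise α w n ω - d n ω / growthFactor α n) ℱ μ := by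
  refine submartingale_nat
    (fun n => ((measurable_discountedNoise hw n.le_succ).sub ((hd n).div_const _)).stronglyMeasurable)
    (fun n => (integrable_discountedNoise hwint n).sub ((hdint n).div_const _)) fun n => ?_
  filter_upwards [condExp_sub_div_const_of_stronglyMeasurable (ℱ.le n)
    (measurable_discountedNoise hw le_rfl).stronglyMeasurable (integrable_discountedNoise hwint _)
    (hdint (n + 1)) (growthFactor α (n + 1)), hrec n] with ω hcond hrecω
  rw [hcond, discountedNoise_succ, growthFactor_succ]
  have hβ := growthFactor_pos hα n
  have hα' : 0 < 1 + α n := by linarith [hα n]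
  have hsplit : ((1 + α n) * d n ω + w n ω) / (growthFactor α n * (1 + α n))
      = d n ω / growthFactor α n + w n ω / (growthFactor α n * (1 + α n)) := by
    field_simp
  linarith [div_le_div_of_nonneg_right hrecω (mul_pos hβ hα').le]

end DiscountedNoise

theorem statement18 {Ω : Type*} [MeasureSpace Ω]
    (hprob : IsProbabilityMeasure (volume : Measure Ω))
    (F : ℕ → MeasurableSpace Ω)
    (hle : ∀ k, F k ≤ (inferInstance : MeasurableSpace Ω))
    (hmono : Monotone F)
    (d w : ℕ → Ω → ℝ)
    (hd0 : ∀ k ω, 0 ≤ d k ω) (hw0 : ∀ k ω, 0 ≤ w k ω)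
    (hdmeas : ∀ k, Measurable[F k] (d k)) (hwmeas : ∀ k, Measurable[F k] (w k))
    (hdint : ∀ k, Integrable (d k)) (hwint : ∀ k, Integrable (w k))
    (α : ℕ → ℝ) (hα : ∀ k, 0 ≤ α k) (hαsum : Summable α)
    (hrec : ∀ k, (volume[d (k + 1)|F k]) ≤ᵐ[volume] fun ω => (1 + α k) * d k ω + w k ω)
    (hwsum : ∀ᵐ ω, Summable (fun k => w k ω)) :
    ∀ᵐ ω, ∃ c : ℝ, Tendsto (fun k => d k ω) atTop (𝓝 c) := by
  let ℱ : Filtration ℕ (inferInstance : MeasurableSpace Ω) := ⟨F, hmono, hle⟩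
  have hsub : Submartingale (fun n ω => discountedNoise α w n ω - d n ω / growthFactor α n)
      ℱ volume :=
    submartingale_discountedNoise_sub hα hdmeas hwmeas hdint hwint hrec
  have hSbdd : ∀ᵐ ω, BddAbove (Set.range fun n => discountedNoise α w n ω) := by
    filter_upwards [hwsum] with ω hω
    exact ⟨_, Set.forall_mem_range.2 (discountedNoise_le_tsum hα (hw0 · ω) hω)⟩
  have hconv := hsub.ae_exists_tendsto_of_le_predictable
    (fun n => (measurable_discountedNoise (ℱ := ℱ) hwmeas le_rfl).stronglyMeasurable)
    (fun ω => monotone_discountedNoise hα (hw0 · ω))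
    (fun n ω => sub_le_self _ (div_nonneg (hd0 n ω) (growthFactor_pos hα n).le)) hSbdd
  obtain ⟨B, hB⟩ := exists_tendsto_growthFactor hαsum
  filter_upwards [hconv, hSbdd] with ω ⟨c, hc⟩ hω
  have hS := tendsto_atTop_ciSup (monotone_discountedNoise hα (hw0 · ω)) hω
  refine ⟨B * ((⨆ n, discountedNoise α w n ω) - c), (hB.mul (hS.sub hc)).congr fun n => ?_⟩
  field_simp [(growthFactor_pos hα n).ne']
  ring
end
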